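/- arXiv:2603.05021 — 2 statements merged into one kernel-verified Lean document; each statement's English description precedes it below -/
import Mathlib

section
/- Let 𝒮 ⊂ ℝⁿ be a compact connected set of positive Lebesgue measure, and let T be a probability density on 𝒮 that is L-Lipschitz with respect to the ℓ¹-norm for some L ≥ 0. Let (𝒮_t)_{t=1}^{m} be a finite partition of 𝒮 into hyperrectangles of positive Lebesgue measure whose pairwise intersections have measure zero, let p be the discretization of T, and let δ̄ be the maximum side length of any cell 𝒮_t over all dimensions. Then KL(T‖U) ≤ KL_D(p‖pᵘ) + log(1 + (n/2) m L δ̄^{n+1}). -/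
/-!
On a box `[a, b]`, pair each point `u` with its mirror image `a + b - u`: for any `s` in the box the
ℓ¹ distances from `s` to `u` and to `a + b - u` add up to at most `∑ⱼ (bⱼ - aⱼ)`, so averaging the
Lipschitz bound over the box gives `T s ≤ (pₜ + aₜ) / λ(𝒮ₜ)` with
`aₜ = (L / 2) (∑ⱼ δⱼ⁽ᵗ⁾) λ(𝒮ₜ) ≤ (n / 2) L δ̄ⁿ⁺¹`. Using this bound inside the logarithm bounds the
contribution of `𝒮ₜ` to `KL(T‖U)` by `pₜ log ((pₜ + aₜ) λ(𝒮) / λ(𝒮ₜ))`, and Jensen's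
inequality for the concave `log` with weights `pₜ` gives
`∑ₜ pₜ log ((pₜ + aₜ) / pₜ) ≤ log ∑ₜ (pₜ + aₜ) = log (1 + ∑ₜ aₜ)`.
-/

open MeasureTheory Real Finset

lemma integral_iUnion_fintype_ae {X ι : Type*} [MeasurableSpace X] [Fintype ι] {μ : Measure X}
    {f : X → ℝ} {s : ι → Set X} (hs : ∀ i, NullMeasurableSet (s i) μ)
    (hd : Pairwise (Function.onFun (AEDisjoint μ) s)) (hf : ∀ i, IntegrableOn f (s i) μ) :
    ∫ x in ⋃ i, s i, f x ∂μ = ∑ i, ∫ x in s i, f x ∂μ := by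
  rw [integral_iUnion_ae hs hd (integrableOn_finite_iUnion.2 hf), tsum_fintype]

lemma continuous_mul_log_mul_const (c : ℝ) : Continuous fun x : ℝ => x * log (x * c) := by
  rcases eq_or_ne c 0 with rfl | hc
  · simpa using continuous_const
  · have h : (fun x : ℝ => x * log (x * c)) = fun x => (x * c) * log (x * c) / c := by
      funext x
      field_simp
    rw [h]
    exact (continuous_mul_log.comp (continuous_mul_const c)).div_const c

lemma setIntegral_mul_log_mul_le {α : Type*} [MeasurableSpace α] {μ : Measure α} {s : Set α}
    {f : α → ℝ} {M c : ℝ} (hs : MeasurableSet s) (hc : 0 < c) (hf : IntegrableOn f s μ)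
    (hflog : IntegrableOn (fun x => f x * log (f x * c)) s μ)
    (hf₀ : ∀ x ∈ s, 0 ≤ f x) (hfM : ∀ x ∈ s, f x ≤ M) :
    ∫ x in s, f x * log (f x * c) ∂μ ≤ (∫ x in s, f x ∂μ) * log (M * c) := by
  rw [← integral_mul_const]
  refine setIntegral_mono_on hflog (hf.mul_const _) hs fun x hx => ?_
  rcases (hf₀ x hx).eq_or_lt with h | h
  · simp [← h]
  · exact mul_le_mul_of_nonneg_left (log_le_log (by positivity) (by gcongr; exact hfM x hx)) h.le

section Box

variable {ι : Type*} [Fintype ι] {a b : ι → ℝ}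

lemma abs_sub_add_abs_sub_reflect_le {a b s u : ℝ} (hs : s ∈ Set.Icc a b) (hu : u ∈ Set.Icc a b) :
    |s - u| + |s - (a + b - u)| ≤ b - a := by
  obtain ⟨hs₁, hs₂⟩ := hs
  obtain ⟨hu₁, hu₂⟩ := hu
  rcases abs_cases (s - u) with ⟨h₁, _⟩ | ⟨h₁, _⟩ <;>
    rcases abs_cases (s - (a + b - u)) with ⟨h₂, _⟩ | ⟨h₂, _⟩ <;> linarith

lemma setIntegral_Icc_comp_reflect {E : Type*} [NormedAddCommGroup E] [NormedSpace ℝ E]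
    (f : (ι → ℝ) → E) : ∫ u in Set.Icc a b, f (a + b - u) = ∫ u in Set.Icc a b, f u := by
  have hpre : (fun u => a + b - u) ⁻¹' Set.Icc a b = Set.Icc a b := by
    rw [Set.preimage_const_sub_Icc, add_sub_cancel_right, add_sub_cancel_left]
  rw [← (volume.measurePreserving_sub_left (a + b)).setIntegral_preimage_emb
    (measurableEmbedding_subLeft _) f, hpre]

lemma le_of_volume_Icc_pos (h : 0 < volume (Set.Icc a b)) : a ≤ b :=
  Set.nonempty_Icc.1 (nonempty_of_measure_ne_zero h.ne')

lemma sum_sub_mul_volume_Icc_le {δ : ℝ} (hab : a ≤ b) (hδ : ∀ j, b j - a j ≤ δ) :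
    (∑ j, (b j - a j)) * (volume (Set.Icc a b)).toReal
      ≤ Fintype.card ι * δ ^ (Fintype.card ι + 1) := by
  have hside : ∀ j, 0 ≤ b j - a j := fun j => sub_nonneg.2 (hab j)
  calc (∑ j, (b j - a j)) * (volume (Set.Icc a b)).toReal
      = (∑ j, (b j - a j)) * ∏ j, (b j - a j) := by rw [Real.volume_Icc_pi_toReal hab]
    _ ≤ (∑ _j : ι, δ) * ∏ _j : ι, δ :=
        mul_le_mul (sum_le_sum fun j _ => hδ j) (prod_le_prod (fun j _ => hside j) fun j _ => hδ j)
          (prod_nonneg fun j _ => hside j) (sum_nonneg fun j _ => (hside j).trans (hδ j))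
    _ = Fintype.card ι * δ ^ (Fintype.card ι + 1) := by
        simp only [sum_const, card_univ, nsmul_eq_mul, prod_const]
        ring

lemma continuousOn_of_abs_sub_le_mul_sum_abs {s : Set (ι → ℝ)} {f : (ι → ℝ) → ℝ} {L : ℝ}
    (hL : 0 ≤ L) (hf : ∀ x ∈ s, ∀ y ∈ s, |f x - f y| ≤ L * ∑ j, |x j - y j|) :
    ContinuousOn f s := by
  refine (LipschitzOnWith.of_dist_le_mul (K := (L * Fintype.card ι).toNNReal) ?_).continuousOn
  intro x hx y hy
  calc dist (f x) (f y) ≤ L * ∑ j, |x j - y j| := hf x hx y hy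
    _ ≤ L * ∑ _j : ι, dist x y := by
        gcongr with j
        exact dist_le_pi_dist x y j
    _ ≤ (L * Fintype.card ι).toNNReal * dist x y := by
        simp only [sum_const, card_univ, nsmul_eq_mul, ← mul_assoc]
        gcongr
        exact le_coe_toNNReal _

lemma mul_volume_Icc_le_setIntegral_add {f : (ι → ℝ) → ℝ} {L : ℝ} (hL : 0 ≤ L)
    (hf : ∀ x ∈ Set.Icc a b, ∀ y ∈ Set.Icc a b, |f x - f y| ≤ L * ∑ j, |x j - y j|)
    {s : ι → ℝ} (hs : s ∈ Set.Icc a b) :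
    f s * (volume (Set.Icc a b)).toReal
      ≤ (∫ u in Set.Icc a b, f u) + L / 2 * (∑ j, (b j - a j)) * (volume (Set.Icc a b)).toReal := by
  have hint : IntegrableOn f (Set.Icc a b) :=
    (continuousOn_of_abs_sub_le_mul_sum_abs hL hf).integrableOn_compact isCompact_Icc
  have hreflect_mem : ∀ u ∈ Set.Icc a b, a + b - u ∈ Set.Icc a b := fun u hu => by
    rwa [← Set.mem_preimage, Set.preimage_const_sub_Icc, add_sub_cancel_right,
      add_sub_cancel_left]
  have hint_reflect : IntegrableOn (fun u => f (a + b - u)) (Set.Icc a b) :=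
    ((continuousOn_of_abs_sub_le_mul_sum_abs hL hf).comp (by fun_prop)
      hreflect_mem).integrableOn_compact isCompact_Icc
  have hpair : ∀ u ∈ Set.Icc a b, 2 * f s ≤ f u + f (a + b - u) + L * ∑ j, (b j - a j) := by
    intro u hu
    have h₁ := (le_abs_self _).trans (hf s hs u hu)
    have h₂ := (le_abs_self _).trans (hf s hs _ (hreflect_mem u hu))
    have h₃ : ∑ j, |s j - u j| + ∑ j, |s j - (a + b - u) j| ≤ ∑ j, (b j - a j) := by
      rw [← sum_add_distrib]
      exact sum_le_sum fun j _ =>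
        abs_sub_add_abs_sub_reflect_le ⟨hs.1 j, hs.2 j⟩ ⟨hu.1 j, hu.2 j⟩
    nlinarith
  have hconst (r : ℝ) : IntegrableOn (fun _ => r) (Set.Icc a b) :=
    integrableOn_const measure_Icc_lt_top.ne
  have hmono : ∫ _ in Set.Icc a b, 2 * f s
      ≤ ∫ u in Set.Icc a b, (f u + f (a + b - u) + L * ∑ j, (b j - a j)) :=
    setIntegral_mono_on (hconst _) ((hint.add hint_reflect).add (hconst _)) measurableSet_Icc hpair
  rw [integral_add (f := fun u => f u + f (a + b - u)) (hint.add hint_reflect) (hconst _),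
    integral_add hint hint_reflect, setIntegral_Icc_comp_reflect, setIntegral_const,
    setIntegral_const, measureReal_def, smul_eq_mul, smul_eq_mul] at hmono
  linear_combination hmono / 2

lemma setIntegral_Icc_mul_log_mul_le {f : (ι → ℝ) → ℝ} {L c : ℝ} (hL : 0 ≤ L)
    (hf : ∀ x ∈ Set.Icc a b, ∀ y ∈ Set.Icc a b, |f x - f y| ≤ L * ∑ j, |x j - y j|)
    (hf₀ : ∀ x ∈ Set.Icc a b, 0 ≤ f x) (hvol : 0 < volume (Set.Icc a b)) (hc : 0 < c) :
    ∫ x in Set.Icc a b, f x * log (f x * c)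
      ≤ (∫ x in Set.Icc a b, f x) * log (((∫ x in Set.Icc a b, f x)
          + L / 2 * (∑ j, (b j - a j)) * (volume (Set.Icc a b)).toReal)
          * (c / (volume (Set.Icc a b)).toReal)) := by
  have hcont := continuousOn_of_abs_sub_le_mul_sum_abs hL hf
  set V := (volume (Set.Icc a b)).toReal
  have hV : 0 < V := ENNReal.toReal_pos hvol.ne' measure_Icc_lt_top.ne
  rw [show ∀ x, x * (c / V) = x / V * c from fun x => by ring]
  refine setIntegral_mul_log_mul_le (μ := volume) measurableSet_Icc hc
    (hcont.integrableOn_compact isCompact_Icc)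
    (((continuous_mul_log_mul_const c).comp_continuousOn hcont).integrableOn_compact isCompact_Icc)
    hf₀ fun x hx => ?_
  rw [le_div_iff₀ hV]
  exact mul_volume_Icc_le_setIntegral_add hL hf hx

end Box

section Discrete

variable {ι : Type*} {s : Finset ι} {p : ι → ℝ}

lemma sum_mul_log_div_le_log_sum {q : ι → ℝ} (hp : ∀ i ∈ s, 0 ≤ p i) (hp₁ : ∑ i ∈ s, p i = 1)
    (hq : ∀ i ∈ s, 0 ≤ q i) (hpq : ∀ i ∈ s, 0 < p i → 0 < q i) :
    ∑ i ∈ s, p i * log (q i / p i) ≤ log (∑ i ∈ s, q i) := by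
  classical
  set s' := s.filter (fun i => p i ≠ 0)
  have hsub : s' ⊆ s := filter_subset _ _
  have hpos : ∀ i ∈ s', 0 < p i := fun i hi =>
    (hp i (hsub hi)).lt_of_ne' (mem_filter.1 hi).2
  have hp₁' : ∑ i ∈ s', p i = 1 := by rwa [sum_filter_ne_zero]
  have hne : s'.Nonempty := nonempty_of_sum_ne_zero (by rw [hp₁']; exact one_ne_zero)
  have hjensen := strictConcaveOn_log_Ioi.concaveOn.le_map_sum (t := s') (w := p)
    (p := fun i => q i / p i) (fun i hi => (hpos i hi).le) hp₁'
    fun i hi => div_pos (hpq i (hsub hi) (hpos i hi)) (hpos i hi)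
  simp only [smul_eq_mul] at hjensen
  calc ∑ i ∈ s, p i * log (q i / p i) = ∑ i ∈ s', p i * log (q i / p i) :=
        (sum_filter_of_ne fun i _ h => left_ne_zero_of_mul h).symm
    _ ≤ log (∑ i ∈ s', p i * (q i / p i)) := hjensen
    _ = log (∑ i ∈ s', q i) := by
        congr 1
        exact sum_congr rfl fun i hi => mul_div_cancel₀ _ (hpos i hi).ne'
    _ ≤ log (∑ i ∈ s, q i) :=
        log_le_log (sum_pos (fun i hi => hpq i (hsub hi) (hpos i hi)) hne)
          (sum_le_sum_of_subset_of_nonneg hsub fun i hi _ => hq i hi)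

lemma sum_mul_log_add_mul_le {a w : ι → ℝ} (hp : ∀ i ∈ s, 0 ≤ p i) (hp₁ : ∑ i ∈ s, p i = 1)
    (ha : ∀ i ∈ s, 0 ≤ a i) (hw : ∀ i ∈ s, 0 < w i) :
    ∑ i ∈ s, p i * log ((p i + a i) * w i)
      ≤ ∑ i ∈ s, p i * log (p i * w i) + log (1 + ∑ i ∈ s, a i) := by
  have hsplit : ∀ i ∈ s, p i * log ((p i + a i) * w i)
      = p i * log (p i * w i) + p i * log ((p i + a i) / p i) := by
    intro i hi
    rcases (hp i hi).eq_or_lt with h | h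
    · simp [← h]
    · have hpa : 0 < p i + a i := by linarith [ha i hi]
      rw [log_mul hpa.ne' (hw i hi).ne', log_mul h.ne' (hw i hi).ne', log_div hpa.ne' h.ne']
      ring
  calc ∑ i ∈ s, p i * log ((p i + a i) * w i)
      = ∑ i ∈ s, p i * log (p i * w i) + ∑ i ∈ s, p i * log ((p i + a i) / p i) := by
        rw [sum_congr rfl hsplit, sum_add_distrib]
    _ ≤ ∑ i ∈ s, p i * log (p i * w i) + log (∑ i ∈ s, (p i + a i)) := by
        gcongr
        exact sum_mul_log_div_le_log_sum hp hp₁ (fun i hi => add_nonneg (hp i hi) (ha i hi))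
          fun i hi h => by linarith [ha i hi]
    _ = ∑ i ∈ s, p i * log (p i * w i) + log (1 + ∑ i ∈ s, a i) := by
        rw [sum_add_distrib, hp₁]

end Discrete

theorem discretization_difference_global_bound_general
    (n m : ℕ)
    (𝒮 : Set (Fin n → ℝ))
    (hcomp : IsCompact 𝒮) (hpos : 0 < volume 𝒮)
    (T : (Fin n → ℝ) → ℝ)
    (hTnonneg : ∀ s ∈ 𝒮, 0 ≤ T s)
    (hTint : (∫ s in 𝒮, T s) = 1)
    -- T is L-Lipschitz w.r.t. the ℓ¹-norm
    (L : ℝ) (hL : 0 ≤ L)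
    (hTLip : ∀ x ∈ 𝒮, ∀ y ∈ 𝒮, |T x - T y| ≤ L * ∑ j : Fin n, |x j - y j|)
    -- hyperrectangular partition of 𝒮
    (St : Fin m → Set (Fin n → ℝ))
    (α β : Fin m → Fin n → ℝ)
    (hSt : ∀ t, St t = Set.Icc (α t) (β t))
    (hStpos : ∀ t, 0 < volume (St t))
    (hcover : (⋃ t, St t) = 𝒮)
    (hdisj : ∀ t t', t ≠ t' → volume (St t ∩ St t') = 0)
    -- maximum side length δ̄ over all cells and dimensions
    (δbar : ℝ)
    (hδbar₁ : ∀ t j, β t j - α t j ≤ δbar)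
    -- discretization of T
    (p : Fin m → ℝ) (hp : ∀ t, p t = ∫ s in St t, T s) :
    (∫ s in 𝒮, T s * Real.log (T s * (volume 𝒮).toReal))
      ≤ (∑ t, p t * Real.log (p t * (volume 𝒮).toReal / (volume (St t)).toReal))
        + Real.log (1 + (n : ℝ) / 2 * (m : ℝ) * L * δbar ^ (n + 1)) := by
  obtain rfl : St = fun t => Set.Icc (α t) (β t) := funext hSt
  set c := (volume 𝒮).toReal
  have hc : 0 < c := ENNReal.toReal_pos hpos.ne' hcomp.measure_lt_top.ne
  have hsub t : Set.Icc (α t) (β t) ⊆ 𝒮 :=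
    hcover ▸ Set.subset_iUnion (fun t => Set.Icc (α t) (β t)) t
  have hLip t : ∀ x ∈ Set.Icc (α t) (β t), ∀ y ∈ Set.Icc (α t) (β t),
      |T x - T y| ≤ L * ∑ j, |x j - y j| := fun x hx y hy => hTLip x (hsub t hx) y (hsub t hy)
  have hTcont t := continuousOn_of_abs_sub_le_mul_sum_abs hL (hLip t)
  have hnull t := (measurableSet_Icc (a := α t) (b := β t)).nullMeasurableSet (μ := volume)
  have hint t := (hTcont t).integrableOn_compact (μ := volume) isCompact_Icc
  have hint_log t := ((continuous_mul_log_mul_const c).comp_continuousOn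
    (hTcont t)).integrableOn_compact (μ := volume) isCompact_Icc
  have hp₀ t : 0 ≤ p t :=
    hp t ▸ setIntegral_nonneg measurableSet_Icc fun x hx => hTnonneg x (hsub t hx)
  have hp₁ : ∑ t, p t = 1 := by
    rw [← hTint, ← hcover, integral_iUnion_fintype_ae hnull hdisj hint]
    exact sum_congr rfl fun t _ => hp t
  set a : Fin m → ℝ :=
    fun t => L / 2 * (∑ j, (β t j - α t j)) * (volume (Set.Icc (α t) (β t))).toReal
  have hαβ t : α t ≤ β t := le_of_volume_Icc_pos (hStpos t)
  have ha₀ t : 0 ≤ a t := by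
    have := sum_nonneg fun j (_ : j ∈ univ) => sub_nonneg.2 (hαβ t j)
    positivity
  have ha_le t : a t ≤ n / 2 * L * δbar ^ (n + 1) := by
    have hbox := sum_sub_mul_volume_Icc_le (hαβ t) (hδbar₁ t)
    rw [Fintype.card_fin] at hbox
    calc a t = L / 2 * ((∑ j, (β t j - α t j)) * (volume (Set.Icc (α t) (β t))).toReal) := by
          simp only [a]; ring
      _ ≤ L / 2 * (n * δbar ^ (n + 1)) := by gcongr
      _ = n / 2 * L * δbar ^ (n + 1) := by ring
  calc ∫ s in 𝒮, T s * log (T s * c)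
      = ∑ t, ∫ s in Set.Icc (α t) (β t), T s * log (T s * c) := by
        rw [← hcover]
        exact integral_iUnion_fintype_ae hnull hdisj hint_log
    _ ≤ ∑ t, p t * log ((p t + a t) * (c / (volume (Set.Icc (α t) (β t))).toReal)) :=
        sum_le_sum fun t _ => hp t ▸ setIntegral_Icc_mul_log_mul_le hL (hLip t)
          (fun x hx => hTnonneg x (hsub t hx)) (hStpos t) hc
    _ ≤ ∑ t, p t * log (p t * (c / (volume (Set.Icc (α t) (β t))).toReal))
          + log (1 + ∑ t, a t) :=
        sum_mul_log_add_mul_le (fun t _ => hp₀ t) hp₁ (fun t _ => ha₀ t)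
          fun t _ => div_pos hc (ENNReal.toReal_pos (hStpos t).ne' measure_Icc_lt_top.ne)
    _ ≤ _ := by
        simp only [mul_div_assoc]
        gcongr
        · exact add_pos_of_pos_of_nonneg one_pos (sum_nonneg fun t _ => ha₀ t)
        · calc ∑ t, a t ≤ ∑ _t : Fin m, n / 2 * L * δbar ^ (n + 1) :=
                sum_le_sum fun t _ => ha_le t
            _ = _ := by simp only [sum_const, card_univ, Fintype.card_fin, nsmul_eq_mul]; ring

/-- global discretization difference bound:
`KL(T‖U) ≤ KL_D(p‖pᵘ) + log(1 + (n/2) m L δ̄^{n+1})`. -/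
theorem discretization_difference_global_bound
    (n m : ℕ)
    (𝒮 : Set (Fin n → ℝ))
    (hcomp : IsCompact 𝒮) (hconn : IsConnected 𝒮) (hpos : 0 < volume 𝒮)
    (T : (Fin n → ℝ) → ℝ)
    (hTnonneg : ∀ s ∈ 𝒮, 0 ≤ T s)
    (hTint : (∫ s in 𝒮, T s) = 1)
    -- T is L-Lipschitz w.r.t. the ℓ¹-norm
    (L : ℝ) (hL : 0 ≤ L)
    (hTLip : ∀ x ∈ 𝒮, ∀ y ∈ 𝒮, |T x - T y| ≤ L * ∑ j : Fin n, |x j - y j|)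
    -- hyperrectangular partition of 𝒮
    (St : Fin m → Set (Fin n → ℝ))
    (α β : Fin m → Fin n → ℝ)
    (hSt : ∀ t, St t = Set.Icc (α t) (β t))
    (hStpos : ∀ t, 0 < volume (St t))
    (hcover : (⋃ t, St t) = 𝒮)
    (hdisj : ∀ t t', t ≠ t' → volume (St t ∩ St t') = 0)
    -- maximum side length δ̄ over all cells and dimensions
    (δbar : ℝ)
    (hδbar₁ : ∀ t j, β t j - α t j ≤ δbar)
    (hδbar₂ : ∃ t j, β t j - α t j = δbar)
    -- discretization of T
    (p : Fin m → ℝ) (hp : ∀ t, p t = ∫ s in St t, T s) :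
    (∫ s in 𝒮, T s * Real.log (T s * (volume 𝒮).toReal))
      ≤ (∑ t, p t * Real.log (p t * (volume 𝒮).toReal / (volume (St t)).toReal))
        + Real.log (1 + (n : ℝ) / 2 * (m : ℝ) * L * δbar ^ (n + 1)) :=
  discretization_difference_global_bound_general n m 𝒮 hcomp hpos T hTnonneg hTint L hL hTLip St α β
    hSt hStpos hcover hdisj δbar hδbar₁ p hp
end

section
/- Let R = ∏_{j=1}^{n} [α_j, β_j] ⊂ ℝⁿ be a hyperrectangle of positive Lebesgue measure with side lengths δ_j = β_j − α_j, let L ≥ 0, p ∈ ℝ, and c ∈ R, and let A be the set of functions τ : R → ℝ that are L-Lipschitz with respect to the ℓ¹-norm and satisfy ∫_R τ(s) ds = p. Then sup_{τ∈A} τ(c) = p/λ(R) + (L/(2λ(R))) Σ_{j=1}^{n} (∏_{ℓ≠j} δ_ℓ) ((c_j − α_j)² + (β_j − c_j)²), and the supremum is attained by some τ ∈ A. -/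
/-!
On `R`, the Lipschitz bound gives `τ x ≥ τ c - L ‖x - c‖₁`; integrating over `R` yields
`λ(R) τ c ≤ p + L ∫_R ‖x - c‖₁`. Equality holds for the cone `τ x = M - L ‖x - c‖₁`, with `M`
fixed by `∫_R τ = p`. On a box, `∫_R ‖x - c‖₁` splits by Fubini into one-dimensional integrals
`∫_{α_j}^{β_j} |t - c_j| dt = ((c_j - α_j)² + (β_j - c_j)²) / 2`.
-/

open MeasureTheory Finset

section L1Lipschitz
variable {ι : Type*} [Fintype ι]

theorem abs_sum_abs_sub_sub_sum_abs_sub_le (x y c : ι → ℝ) :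
    |(∑ j, |x j - c j|) - (∑ j, |y j - c j|)| ≤ ∑ j, |x j - y j| := by
  rw [← sum_sub_distrib]
  refine (abs_sum_le_sum_abs _ _).trans (sum_le_sum fun j _ => ?_)
  simpa using abs_abs_sub_abs_le_abs_sub (x j - c j) (y j - c j)

theorem lipschitzOnWith_of_abs_sub_le_mul_sum_abs {f : (ι → ℝ) → ℝ} {s : Set (ι → ℝ)}
    {L : ℝ} (hL : 0 ≤ L) (hf : ∀ x ∈ s, ∀ y ∈ s, |f x - f y| ≤ L * ∑ j, |x j - y j|) :
    LipschitzOnWith (L * Fintype.card ι).toNNReal f s := by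
  refine LipschitzOnWith.of_dist_le_mul fun x hx y hy => ?_
  calc dist (f x) (f y) ≤ L * ∑ j, |x j - y j| := hf x hx y hy
    _ ≤ L * ∑ _j : ι, dist x y :=
        mul_le_mul_of_nonneg_left (sum_le_sum fun j _ => dist_le_pi_dist x y j) hL
    _ = (L * Fintype.card ι).toNNReal * dist x y := by
        rw [Real.coe_toNNReal _ (by positivity), sum_const, card_univ, nsmul_eq_mul]; ring

variable {μ : Measure (ι → ℝ)} [IsFiniteMeasureOnCompacts μ] {R : Set (ι → ℝ)} {L : ℝ}

theorem integrableOn_sum_abs_sub (hR : IsCompact R) (c : ι → ℝ) :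
    IntegrableOn (fun x => ∑ j, |x j - c j|) R μ :=
  (Continuous.continuousOn (by fun_prop)).integrableOn_compact hR

theorem integrableOn_const_sub_mul_sum_abs_sub (hR : IsCompact R) (M L : ℝ) (c : ι → ℝ) :
    IntegrableOn (fun x => M - L * ∑ j, |x j - c j|) R μ :=
  (integrableOn_const hR.measure_lt_top.ne).sub ((integrableOn_sum_abs_sub hR c).const_mul L)

theorem setIntegral_const_sub_mul_sum_abs_sub (hR : IsCompact R) (M L : ℝ) (c : ι → ℝ) :
    ∫ x in R, (M - L * ∑ j, |x j - c j|) ∂μ =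
      M * μ.real R - L * ∫ x in R, ∑ j, |x j - c j| ∂μ := by
  have hM : IntegrableOn (fun _ => M) R μ := integrableOn_const hR.measure_lt_top.ne
  rw [integral_sub hM ((integrableOn_sum_abs_sub hR c).const_mul L), setIntegral_const,
    integral_const_mul, smul_eq_mul, mul_comm]

theorem mul_measureReal_sub_le_setIntegral (hR : IsCompact R) (hL : 0 ≤ L)
    {τ : (ι → ℝ) → ℝ} (hτ : ∀ x ∈ R, ∀ y ∈ R, |τ x - τ y| ≤ L * ∑ j, |x j - y j|)
    {c : ι → ℝ} (hc : c ∈ R) :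
    τ c * μ.real R - L * ∫ x in R, ∑ j, |x j - c j| ∂μ ≤ ∫ x in R, τ x ∂μ := by
  have hτint : IntegrableOn τ R μ :=
    (lipschitzOnWith_of_abs_sub_le_mul_sum_abs hL hτ).continuousOn.integrableOn_compact hR
  have hcone : ∀ x ∈ R, τ c - L * ∑ j, |x j - c j| ≤ τ x := fun x hx => by
    have := (le_abs_self _).trans (hτ c hc x hx)
    simp only [abs_sub_comm (c _)] at this
    linarith
  rw [← setIntegral_const_sub_mul_sum_abs_sub hR]
  exact setIntegral_mono_on (integrableOn_const_sub_mul_sum_abs_sub hR _ L c) hτint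
    hR.isClosed.measurableSet hcone

theorem isGreatest_eval_of_abs_sub_le_mul_sum_abs (hR : IsCompact R) (hRpos : 0 < μ R)
    (hL : 0 ≤ L) (p : ℝ) {c : ι → ℝ} (hc : c ∈ R) :
    IsGreatest
      {y : ℝ | ∃ τ : (ι → ℝ) → ℝ,
        (∀ x ∈ R, ∀ x' ∈ R, |τ x - τ x'| ≤ L * ∑ j, |x j - x' j|) ∧
        (∫ s in R, τ s ∂μ) = p ∧
        y = τ c}
      ((p + L * ∫ x in R, ∑ j, |x j - c j| ∂μ) / μ.real R) := by
  have hV : 0 < μ.real R := ENNReal.toReal_pos hRpos.ne' hR.measure_lt_top.ne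
  set M := (p + L * ∫ x in R, ∑ j, |x j - c j| ∂μ) / μ.real R with hM
  refine ⟨⟨fun x => M - L * ∑ j, |x j - c j|, fun x _ x' _ => ?_, ?_, by simp⟩, ?_⟩
  · calc |(M - L * ∑ j, |x j - c j|) - (M - L * ∑ j, |x' j - c j|)|
        = L * |(∑ j, |x j - c j|) - (∑ j, |x' j - c j|)| := by
          rw [sub_sub_sub_cancel_left, ← mul_sub, abs_mul, abs_of_nonneg hL, abs_sub_comm]
      _ ≤ L * ∑ j, |x j - x' j| :=
          mul_le_mul_of_nonneg_left (abs_sum_abs_sub_sub_sum_abs_sub_le x x' c) hL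
  · rw [setIntegral_const_sub_mul_sum_abs_sub hR, hM, div_mul_cancel₀ _ hV.ne']
    ring
  · rintro y ⟨τ, hτ, rfl, rfl⟩
    rw [le_div_iff₀ hV]
    linarith [mul_measureReal_sub_le_setIntegral (μ := μ) hR hL hτ hc]

end L1Lipschitz

theorem setIntegral_Icc_pi_comp_eval {ι : Type*} [Fintype ι] [DecidableEq ι]
    {α β : ι → ℝ} (hαβ : α ≤ β) (g : ℝ → ℝ) (j : ι) :
    ∫ x in Set.Icc α β, g (x j) =
      (∏ l ∈ univ.erase j, (β l - α l)) * ∫ t in Set.Icc (α j) (β j), g t := by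
  have hg : (fun x : ι → ℝ => g (x j)) =
      fun x => ∏ i, (if i = j then g else fun _ => 1) (x i) := by
    ext x
    rw [← mul_prod_erase univ _ (mem_univ j), if_pos rfl, prod_eq_one, mul_one]
    intro i hi
    rw [if_neg (ne_of_mem_erase hi)]
  rw [← Set.pi_univ_Icc, volume_pi, Measure.restrict_pi_pi, hg,
    integral_fintype_prod_eq_prod, ← mul_prod_erase univ _ (mem_univ j), if_pos rfl, mul_comm]
  congr 1
  refine prod_congr rfl fun i hi => ?_
  simp [if_neg (ne_of_mem_erase hi), hαβ i]

theorem setIntegral_Icc_abs_sub {a b m : ℝ} (ham : a ≤ m) (hmb : m ≤ b) :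
    ∫ t in Set.Icc a b, |t - m| = ((m - a) ^ 2 + (b - m) ^ 2) / 2 := by
  have hint : ∀ u v : ℝ, IntervalIntegrable (fun t => |t - m|) volume u v := fun u v =>
    (continuous_id.sub continuous_const).abs.intervalIntegrable u v
  have left : ∫ t in a..m, |t - m| = ∫ t in a..m, (m - t) :=
    intervalIntegral.integral_congr fun t ht => by
      rw [Set.uIcc_of_le ham] at ht
      simp [abs_of_nonpos (sub_nonpos.2 ht.2)]
  have right : ∫ t in m..b, |t - m| = ∫ t in m..b, (t - m) :=
    intervalIntegral.integral_congr fun t ht => by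
      rw [Set.uIcc_of_le hmb] at ht
      simp [abs_of_nonneg (sub_nonneg.2 ht.1)]
  rw [integral_Icc_eq_integral_Ioc, ← intervalIntegral.integral_of_le (ham.trans hmb),
    ← intervalIntegral.integral_add_adjacent_intervals (hint a m) (hint m b), left, right]
  simp only [intervalIntegral.integral_comp_sub_left (fun x : ℝ => x), sub_self, integral_id,
    ne_eq, OfNat.ofNat_ne_zero, not_false_eq_true, zero_pow, sub_zero,
    intervalIntegral.intervalIntegrable_id, intervalIntegrable_const,
    intervalIntegral.integral_sub, intervalIntegral.integral_const, smul_eq_mul]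
  ring

theorem setIntegral_Icc_sum_abs_sub {ι : Type*} [Fintype ι] [DecidableEq ι] {α β c : ι → ℝ}
    (hc : c ∈ Set.Icc α β) :
    ∫ x in Set.Icc α β, ∑ j, |x j - c j| =
      (∑ j, (∏ l ∈ univ.erase j, (β l - α l)) * ((c j - α j) ^ 2 + (β j - c j) ^ 2)) / 2 := by
  rw [integral_finsetSum _ fun j _ => (Continuous.continuousOn (by fun_prop)).integrableOn_compact
      isCompact_Icc, sum_div]
  refine sum_congr rfl fun j _ => ?_
  rw [setIntegral_Icc_pi_comp_eval (hc.1.trans hc.2) (fun t => |t - c j|) j,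
    setIntegral_Icc_abs_sub (hc.1 j) (hc.2 j), mul_div_assoc]

/-- Lemma: solution of the pointwise relaxed maximization problem:
over all `L`-Lipschitz (ℓ¹) functions `τ` on the hyperrectangle `R` with `∫_R τ = p`,
the largest attainable value at a fixed point `c ∈ R` equals
`p/λ(R) + (L/(2λ(R))) Σ_j (Π_{ℓ≠j} δ_ℓ) ((c_j−α_j)² + (β_j−c_j)²)`, and it is attained. -/
theorem relaxed_pointwise_max_over_rectangle
    (n : ℕ)
    (α β : Fin n → ℝ)
    (R : Set (Fin n → ℝ)) (hR : R = Set.Icc α β)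
    (hRpos : 0 < volume R)
    (L p : ℝ) (hL : 0 ≤ L)
    (c : Fin n → ℝ) (hc : c ∈ R) :
    IsGreatest
      {y : ℝ | ∃ τ : (Fin n → ℝ) → ℝ,
        (∀ x ∈ R, ∀ x' ∈ R, |τ x - τ x'| ≤ L * ∑ j : Fin n, |x j - x' j|) ∧
        (∫ s in R, τ s) = p ∧
        y = τ c}
      (p / (volume R).toReal
        + L / (2 * (volume R).toReal) *
            ∑ j : Fin n, (∏ l ∈ Finset.univ.erase j, (β l - α l)) *
              ((c j - α j) ^ 2 + (β j - c j) ^ 2)) := by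
  subst hR
  convert isGreatest_eval_of_abs_sub_le_mul_sum_abs isCompact_Icc hRpos hL p hc using 1
  rw [setIntegral_Icc_sum_abs_sub hc, measureReal_def]
  ring
end
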